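/- arXiv:2105.09497 — 2 statements merged into one kernel-verified Lean document; each statement's English description precedes it below -/
import Mathlib

section
/- For the linear-Gaussian UKI covariance recursion C_{n+1}^{-1} = (1/2)C_n^{-1} + (1/2)GᵀΣ_η^{-1}G with GᵀΣ_η^{-1}G positive definite, the sequence C_n converges and its limit is C_∞ = (GᵀΣ_η^{-1}G)^{-1}, i.e., the fixed point X of X^{-1} = (1/2)X^{-1} + (1/2)GᵀΣ_η^{-1}G. -/
open Matrix Filter Topology

/-!
Writing `Bₙ = Cₙ⁻¹`, the recursion is the affine contraction `Bₙ₊₁ = ½Bₙ + ½S`, so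
`Bₙ = S + 2⁻ⁿ(B₀ - S) → S`. As `S` is invertible, `Bₙ` is eventually invertible, hence
`Cₙ = Bₙ⁻¹` from then on (the junk value `Cₙ⁻¹ = 0` of a singular `Cₙ` is excluded), and
continuity of matrix inversion at `S` gives `Cₙ → S⁻¹`.
-/
theorem eq_add_pow_smul_sub_of_eq_smul_add_smul {R E : Type*} [CommRing R] [AddCommGroup E]
    [Module R E] {a b : R} (hab : a + b = 1) {s : E} {x : ℕ → E}
    (hx : ∀ n, x (n + 1) = a • x n + b • s) (n : ℕ) : x n = s + a ^ n • (x 0 - s) := by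
  obtain rfl : b = 1 - a := eq_sub_of_add_eq' hab
  induction n with
  | zero => simp
  | succ n ih =>
    rw [hx, ih, pow_succ', mul_smul]
    module

theorem tendsto_of_eq_smul_add_smul {𝕜 E : Type*} [NormedField 𝕜] [AddCommGroup E]
    [TopologicalSpace E] [Module 𝕜 E] [ContinuousSMul 𝕜 E] [ContinuousAdd E]
    {a b : 𝕜} (ha : ‖a‖ < 1) (hab : a + b = 1) {s : E} {x : ℕ → E}
    (hx : ∀ n, x (n + 1) = a • x n + b • s) : Tendsto x atTop (𝓝 s) := by
  have hpow : Tendsto (fun n ↦ a ^ n • (x 0 - s)) atTop (𝓝 0) := by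
    simpa using (tendsto_pow_atTop_nhds_zero_of_norm_lt_one ha).smul_const (x 0 - s)
  rw [funext (eq_add_pow_smul_sub_of_eq_smul_add_smul hab hx)]
  simpa using hpow.const_add s

theorem Matrix.tendsto_of_tendsto_nonsing_inv {ι n 𝕜 : Type*} [Fintype n] [DecidableEq n]
    [Field 𝕜] [TopologicalSpace 𝕜] [IsTopologicalDivisionRing 𝕜] [T1Space 𝕜]
    {l : Filter ι} {M : ι → Matrix n n 𝕜} {A : Matrix n n 𝕜}
    (h : Tendsto (fun i ↦ (M i)⁻¹) l (𝓝 A)) (hA : A.det ≠ 0) :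
    Tendsto M l (𝓝 A⁻¹) := by
  have hinv : ContinuousAt Inv.inv A :=
    continuousAt_matrix_inv A (by simpa only [Ring.inverse_eq_inv'] using continuousAt_inv₀ hA)
  have hdet : ∀ᶠ i in l, (M i)⁻¹.det ≠ 0 :=
    ((continuous_id.matrix_det.tendsto A).comp h).eventually_ne hA
  refine (hinv.tendsto.comp h).congr' (hdet.mono fun i hi ↦ ?_)
  exact nonsing_inv_nonsing_inv _ (isUnit_nonsing_inv_det_iff.mp (Ne.isUnit hi))

theorem uki_linear_covariance_convergence_general {nθ : ℕ}
    (S : Matrix (Fin nθ) (Fin nθ) ℝ) (hSpd : S.PosDef)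
    (C : ℕ → Matrix (Fin nθ) (Fin nθ) ℝ)
    (hrec : ∀ n, (C (n + 1))⁻¹ = (1 / 2 : ℝ) • (C n)⁻¹ + (1 / 2 : ℝ) • S) :
    Tendsto C atTop (𝓝 S⁻¹) :=
  tendsto_of_tendsto_nonsing_inv
    (tendsto_of_eq_smul_add_smul (by norm_num) (by norm_num) hrec) hSpd.det_pos.ne'

/-- For the linear-Gaussian UKI covariance recursion
`C_{n+1}⁻¹ = ½C_n⁻¹ + ½GᵀΣ_η⁻¹G` with `S = GᵀΣ_η⁻¹G` positive definite and `C_0`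
positive definite, the sequence `C_n` converges to `C_∞ = S⁻¹`, the fixed point of
`X⁻¹ = ½X⁻¹ + ½S`. -/
theorem uki_linear_covariance_convergence {nθ ny : ℕ}
    (G : Matrix (Fin ny) (Fin nθ) ℝ)
    (Se : Matrix (Fin ny) (Fin ny) ℝ) (hSe : Se.PosDef)
    (S : Matrix (Fin nθ) (Fin nθ) ℝ) (hS : S = Gᵀ * Se⁻¹ * G) (hSpd : S.PosDef)
    (C : ℕ → Matrix (Fin nθ) (Fin nθ) ℝ)
    (hC0 : (C 0).PosDef)
    (hrec : ∀ n, (C (n + 1))⁻¹ = (1 / 2 : ℝ) • (C n)⁻¹ + (1 / 2 : ℝ) • S) :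
    Tendsto C atTop (𝓝 S⁻¹) :=
  uki_linear_covariance_convergence_general S hSpd C hrec
end

section
/- In the fixed point of the linear-Gaussian UKI, the mean satisfies m_∞ = (GᵀΣ_η^{-1}G)^{-1}GᵀΣ_η^{-1}y, i.e., m_∞ is the minimizer of the least-squares objective Φ(θ) = ½‖Σ_η^{-1/2}(y − Gθ)‖². -/
/-!
With `W = Σ_η⁻¹`, `A = GᵀWG` and residual `r = y − Gm_∞`, the formula for `m_∞` is the normal
equation `GᵀWr = 0`. Since `(GCGᵀ + 2Σ_η)(½Wr) = r`, the gain applied to `r` is `½CGᵀWr = 0`,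
so `m_∞` is fixed. The same orthogonality kills the cross terms in
`Φ(θ) = Φ(m_∞) + ½(θ − m_∞)ᵀA(θ − m_∞)`, and `A` is positive definite.
-/

open Matrix

namespace Matrix

variable {R : Type*} [CommRing R] {m n : Type*} [Fintype m] [Fintype n]

theorem transpose_mulVec_mulVec_sub_normal_solution_eq_zero [DecidableEq n]
    (G : Matrix m n R) (W : Matrix m m R) (hA : IsUnit (Gᵀ * W * G).det) (y : m → R) :
    Gᵀ *ᵥ (W *ᵥ (y - G *ᵥ (((Gᵀ * W * G)⁻¹ * Gᵀ * W) *ᵥ y))) = 0 := by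
  rw [mulVec_sub, mulVec_sub]
  simp only [mulVec_mulVec, ← Matrix.mul_assoc]
  rw [Matrix.mul_nonsing_inv _ hA, Matrix.one_mul, sub_self]

theorem transpose_mulVec_inv_add_smul_mulVec_eq_zero [DecidableEq m] {K : Type*} [Field K]
    (G : Matrix m n K) (C : Matrix n n K) (S : Matrix m m K) (hS : IsUnit S.det)
    {c : K} (hc : c ≠ 0) {r : m → K} (hr : Gᵀ *ᵥ (S⁻¹ *ᵥ r) = 0) :
    Gᵀ *ᵥ ((G * C * Gᵀ + c • S)⁻¹ *ᵥ r) = 0 := by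
  set M := G * C * Gᵀ + c • S
  have hv : M *ᵥ (c⁻¹ • S⁻¹ *ᵥ r) = r := by
    rw [add_mulVec, mulVec_smul, ← mulVec_mulVec, hr, mulVec_zero, smul_zero, zero_add,
      smul_mulVec, mulVec_smul, smul_smul, mul_inv_cancel₀ hc, one_smul, mulVec_mulVec,
      Matrix.mul_nonsing_inv _ hS, one_mulVec]
  by_cases hM : IsUnit M.det
  · rw [← hv, mulVec_mulVec _ M⁻¹, Matrix.nonsing_inv_mul _ hM, one_mulVec, mulVec_smul, hr,
      smul_zero]
  · rw [Matrix.nonsing_inv_apply_not_isUnit _ hM, zero_mulVec, mulVec_zero]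

theorem sub_mulVec_dotProduct_mulVec_sub_mulVec (G : Matrix m n R) {W : Matrix m m R}
    (hW : W.IsSymm) {r : m → R} (hr : Gᵀ *ᵥ (W *ᵥ r) = 0) (d : n → R) :
    (r - G *ᵥ d) ⬝ᵥ (W *ᵥ (r - G *ᵥ d)) = r ⬝ᵥ (W *ᵥ r) + d ⬝ᵥ ((Gᵀ * W * G) *ᵥ d) := by
  have hcross : (G *ᵥ d) ⬝ᵥ (W *ᵥ r) = 0 := by
    rw [dotProduct_comm, dotProduct_mulVec, ← mulVec_transpose, hr, zero_dotProduct]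
  have hcross' : r ⬝ᵥ (W *ᵥ (G *ᵥ d)) = 0 := by
    rw [dotProduct_mulVec, ← mulVec_transpose, hW.eq, dotProduct_comm, hcross]
  have hquad : (G *ᵥ d) ⬝ᵥ (W *ᵥ (G *ᵥ d)) = d ⬝ᵥ ((Gᵀ * W * G) *ᵥ d) := by
    rw [dotProduct_comm, dotProduct_mulVec, ← mulVec_transpose, mulVec_mulVec, mulVec_mulVec,
      dotProduct_comm]
  rw [mulVec_sub, dotProduct_sub, sub_dotProduct, sub_dotProduct, hcross, hcross', hquad]
  ring

end Matrix

theorem uki_linear_mean_fixed_point_general {nθ ny : ℕ}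
    (G : Matrix (Fin ny) (Fin nθ) ℝ)
    (Se : Matrix (Fin ny) (Fin ny) ℝ) (hSe : Se.PosDef)
    (hrank : (Gᵀ * Se⁻¹ * G).PosDef)
    (y : Fin ny → ℝ)
    (C : Matrix (Fin nθ) (Fin nθ) ℝ)
    (minf : Fin nθ → ℝ) (hm : minf = ((Gᵀ * Se⁻¹ * G)⁻¹ * Gᵀ * Se⁻¹) *ᵥ y)
    (Φ : (Fin nθ → ℝ) → ℝ)
    (hΦ : ∀ θ, Φ θ = (1 / 2) * ((y - G *ᵥ θ) ⬝ᵥ (Se⁻¹ *ᵥ (y - G *ᵥ θ)))) :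
    (minf + (C * Gᵀ * (G * C * Gᵀ + (2 : ℝ) • Se)⁻¹) *ᵥ (y - G *ᵥ minf) = minf) ∧
    (∀ θ, Φ minf ≤ Φ θ) ∧ (∀ θ, Φ θ = Φ minf → θ = minf) := by
  set A := Gᵀ * Se⁻¹ * G
  have hnormal : Gᵀ *ᵥ (Se⁻¹ *ᵥ (y - G *ᵥ minf)) = 0 := hm ▸
    transpose_mulVec_mulVec_sub_normal_solution_eq_zero G _
      ((isUnit_iff_isUnit_det _).1 hrank.isUnit) y
  have hexpand : ∀ θ, Φ θ = Φ minf + (1 / 2) * ((θ - minf) ⬝ᵥ (A *ᵥ (θ - minf))) := by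
    intro θ
    have hres : y - G *ᵥ θ = (y - G *ᵥ minf) - G *ᵥ (θ - minf) := by
      rw [mulVec_sub]; abel
    rw [hΦ, hΦ, hres, sub_mulVec_dotProduct_mulVec_sub_mulVec G
      (by simpa using hSe.inv.isHermitian) hnormal]
    ring
  refine ⟨?_, fun θ => ?_, fun θ hθ => ?_⟩
  · rw [← mulVec_mulVec, ← mulVec_mulVec, transpose_mulVec_inv_add_smul_mulVec_eq_zero G C Se
      ((isUnit_iff_isUnit_det _).1 hSe.isUnit) two_ne_zero hnormal, mulVec_zero, add_zero]
  · have := hrank.posSemidef.dotProduct_mulVec_nonneg (θ - minf)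
    rw [hexpand θ]
    simp only [star_trivial] at this
    linarith
  · by_contra hne
    have := hrank.dotProduct_mulVec_pos (sub_ne_zero_of_ne hne)
    rw [hexpand θ] at hθ
    simp only [star_trivial] at this
    linarith

/-- At the fixed point of the linear-Gaussian UKI, the mean
`m_∞ = (GᵀΣ_η⁻¹G)⁻¹GᵀΣ_η⁻¹y` is a fixed point of the mean update with
`C = (GᵀΣ_η⁻¹G)⁻¹`, and it is the unique minimizer of the least-squares objective
`Φ(θ) = ½‖Σ_η^{-1/2}(y − Gθ)‖² = ½ (y − Gθ)ᵀΣ_η⁻¹(y − Gθ)`. -/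
theorem uki_linear_mean_fixed_point {nθ ny : ℕ}
    (G : Matrix (Fin ny) (Fin nθ) ℝ)
    (Se : Matrix (Fin ny) (Fin ny) ℝ) (hSe : Se.PosDef)
    (hrank : (Gᵀ * Se⁻¹ * G).PosDef)
    (y : Fin ny → ℝ)
    (C : Matrix (Fin nθ) (Fin nθ) ℝ) (hC : C = (Gᵀ * Se⁻¹ * G)⁻¹)
    (minf : Fin nθ → ℝ) (hm : minf = ((Gᵀ * Se⁻¹ * G)⁻¹ * Gᵀ * Se⁻¹) *ᵥ y)
    (Φ : (Fin nθ → ℝ) → ℝ)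
    (hΦ : ∀ θ, Φ θ = (1 / 2) * ((y - G *ᵥ θ) ⬝ᵥ (Se⁻¹ *ᵥ (y - G *ᵥ θ)))) :
    (minf + (C * Gᵀ * (G * C * Gᵀ + (2 : ℝ) • Se)⁻¹) *ᵥ (y - G *ᵥ minf) = minf) ∧
    (∀ θ, Φ minf ≤ Φ θ) ∧ (∀ θ, Φ θ = Φ minf → θ = minf) :=
  uki_linear_mean_fixed_point_general G Se hSe hrank y C minf hm Φ hΦ
end
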